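/- Let π be a Poisson tensor on ℝ^N, c a Casimir function for π, v₁, v₂, v₃, v₄ Poisson vector fields for π, and λ ∈ ℝ. Then the bivector field (x,y) ↦ π_TM(x,y) + λ c(x) ( v₁,V ∧ v₂,V + v₃,V ∧ v₄,V )(x,y) is a Poisson tensor on ℝ^N × ℝ^N. -/

import Mathlib

open scoped BigOperators

/-- Partial derivative of `f : ℝ^N → ℝ` in the `s`-th coordinate direction. -/
noncomputable def pd {N : ℕ} (f : (Fin N → ℝ) → ℝ) (s : Fin N) (x : Fin N → ℝ) : ℝ :=
  fderiv ℝ f x (Pi.single s 1)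

/-- Coordinate direction on `ℝ^N × ℝ^N` indexed by `Fin N ⊕ Fin N`. -/
noncomputable def dir (N : ℕ) (a : Fin N ⊕ Fin N) : (Fin N → ℝ) × (Fin N → ℝ) :=
  Sum.elim (fun i => (Pi.single i 1, 0)) (fun i => (0, Pi.single i 1)) a

/-- Partial derivative on `ℝ^N × ℝ^N` in the `a`-th coordinate direction. -/
noncomputable def pdT {N : ℕ} (F : (Fin N → ℝ) × (Fin N → ℝ) → ℝ)
    (a : Fin N ⊕ Fin N) (z : (Fin N → ℝ) × (Fin N → ℝ)) : ℝ :=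
  fderiv ℝ F z (dir N a)

/-- `π` is a Poisson tensor on `ℝ^N`: a smooth antisymmetric bivector field
satisfying the Jacobi identity. -/
def IsPoisson {N : ℕ} (π : (Fin N → ℝ) → Matrix (Fin N) (Fin N) ℝ) : Prop :=
  (∀ i j, ContDiff ℝ (⊤ : ℕ∞) fun x => π x i j) ∧
  (∀ x i j, π x j i = - π x i j) ∧
  (∀ x i j k, ∑ s, (π x i s * pd (fun x => π x j k) s x
      + π x j s * pd (fun x => π x k i) s x
      + π x k s * pd (fun x => π x i j) s x) = 0)

/-- `v` is a (smooth) Poisson vector field for `π` (i.e. `L_v π = 0`). -/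
def IsPoissonVF {N : ℕ} (π : (Fin N → ℝ) → Matrix (Fin N) (Fin N) ℝ)
    (v : (Fin N → ℝ) → Fin N → ℝ) : Prop :=
  (∀ i, ContDiff ℝ (⊤ : ℕ∞) fun x => v x i) ∧
  (∀ x i j, ∑ s, (pd (fun x => π x i j) s x * v x s
      - π x s j * pd (fun x => v x i) s x
      - π x i s * pd (fun x => v x j) s x) = 0)

/-- The tangent lift `π_TM` of `π` to `ℝ^N × ℝ^N`. -/
noncomputable def tlift {N : ℕ} (π : (Fin N → ℝ) → Matrix (Fin N) (Fin N) ℝ)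
    (z : (Fin N → ℝ) × (Fin N → ℝ)) : Matrix (Fin N ⊕ Fin N) (Fin N ⊕ Fin N) ℝ :=
  Matrix.of fun a b =>
    match a, b with
    | Sum.inl _, Sum.inl _ => 0
    | Sum.inl i, Sum.inr j => π z.1 i j
    | Sum.inr i, Sum.inl j => π z.1 i j
    | Sum.inr i, Sum.inr j => ∑ s, pd (fun x => π x i j) s z.1 * z.2 s

/-- The complete lift `v_C` of a vector field `v`. -/
noncomputable def liftC {N : ℕ} (v : (Fin N → ℝ) → Fin N → ℝ)
    (z : (Fin N → ℝ) × (Fin N → ℝ)) : Fin N ⊕ Fin N → ℝ :=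
  Sum.elim (fun i => v z.1 i) (fun i => ∑ s, pd (fun x => v x i) s z.1 * z.2 s)

/-- The vertical lift `v_V` of a vector field `v`. -/
def liftV {N : ℕ} (v : (Fin N → ℝ) → Fin N → ℝ)
    (z : (Fin N → ℝ) × (Fin N → ℝ)) : Fin N ⊕ Fin N → ℝ :=
  Sum.elim (fun _ => 0) (fun i => v z.1 i)

/-- The wedge `u ∧ w` of two vector fields, as a bivector field. -/
def wedge {Z ι : Type*} (u w : Z → ι → ℝ) (z : Z) : Matrix ι ι ℝ :=
  Matrix.of fun a b => u z a * w z b - u z b * w z a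

/-- A Poisson tensor on `ℝ^N × ℝ^N`: a smooth antisymmetric bivector field
satisfying the Jacobi identity. -/
def IsPoissonT {N : ℕ}
    (P : (Fin N → ℝ) × (Fin N → ℝ) → Matrix (Fin N ⊕ Fin N) (Fin N ⊕ Fin N) ℝ) : Prop :=
  (∀ a b, ContDiff ℝ (⊤ : ℕ∞) fun z => P z a b) ∧
  (∀ z a b, P z b a = - P z a b) ∧
  (∀ z a b c, ∑ s, (P z a s * pdT (fun z => P z b c) s z
      + P z b s * pdT (fun z => P z c a) s z
      + P z c s * pdT (fun z => P z a b) s z) = 0)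

/-- `c` is a Casimir function for `π` on `ℝ^N`. -/
def IsCasimir {N : ℕ} (π : (Fin N → ℝ) → Matrix (Fin N) (Fin N) ℝ)
    (c : (Fin N → ℝ) → ℝ) : Prop :=
  ContDiff ℝ (⊤ : ℕ∞) c ∧ ∀ x j, ∑ i, pd c i x * π x i j = 0

/-- `F` is a Casimir function for the bivector field `P` on `ℝ^N × ℝ^N`. -/
def IsCasimirT {N : ℕ}
    (P : (Fin N → ℝ) × (Fin N → ℝ) → Matrix (Fin N ⊕ Fin N) (Fin N ⊕ Fin N) ℝ)
    (F : (Fin N → ℝ) × (Fin N → ℝ) → ℝ) : Prop :=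
  ∀ z b, ∑ a, pdT F a z * P z a b = 0

/-- `f ∘ q : ℝ^N × ℝ^N → ℝ`. -/
def fq {N : ℕ} (f : (Fin N → ℝ) → ℝ) (z : (Fin N → ℝ) × (Fin N → ℝ)) : ℝ := f z.1

/-- The fiber-wise linear function `l_{df}` on `ℝ^N × ℝ^N`. -/
noncomputable def ldf {N : ℕ} (f : (Fin N → ℝ) → ℝ) (z : (Fin N → ℝ) × (Fin N → ℝ)) : ℝ :=
  ∑ s, pd f s z.1 * z.2 s

/-- The commutator `[v,w]` of two vector fields on `ℝ^N`. -/
noncomputable def vbr {N : ℕ} (v w : (Fin N → ℝ) → Fin N → ℝ)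
    (x : Fin N → ℝ) (i : Fin N) : ℝ :=
  ∑ s, (v x s * pd (fun x => w x i) s x - w x s * pd (fun x => v x i) s x)

section AuxPD
variable {N : ℕ} {f g : (Fin N → ℝ) → ℝ} {x : Fin N → ℝ} {s : Fin N}

lemma pd_congr (h : f = g) (s : Fin N) (x : Fin N → ℝ) : pd f s x = pd g s x := by rw [h]

lemma pd_const (c : ℝ) : pd (fun _ => c) s x = 0 := by simp [pd]

lemma pd_add (hf : DifferentiableAt ℝ f x) (hg : DifferentiableAt ℝ g x) :
    pd (fun x => f x + g x) s x = pd f s x + pd g s x := by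
  simp [pd, fderiv_fun_add hf hg]

lemma pd_neg : pd (fun x => -f x) s x = - pd f s x := by
  simp [pd, fderiv_neg]

lemma pd_sub (hf : DifferentiableAt ℝ f x) (hg : DifferentiableAt ℝ g x) :
    pd (fun x => f x - g x) s x = pd f s x - pd g s x := by
  simp [pd, fderiv_fun_sub hf hg]

lemma pd_mul (hf : DifferentiableAt ℝ f x) (hg : DifferentiableAt ℝ g x) :
    pd (fun x => f x * g x) s x = pd f s x * g x + f x * pd g s x := by
  simp [pd, fderiv_fun_mul hf hg, smul_eq_mul]; ring

lemma pd_sum {ι : Type*} [Fintype ι] (f : ι → (Fin N → ℝ) → ℝ)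
    (hf : ∀ t, DifferentiableAt ℝ (f t) x) :
    pd (fun x => ∑ t, f t x) s x = ∑ t, pd (f t) s x := by
  simp [pd, fderiv_fun_sum (fun t _ => hf t)]

lemma contDiff_pd (hf : ContDiff ℝ (⊤ : ℕ∞) f) (s : Fin N) : ContDiff ℝ (⊤ : ℕ∞) fun x => pd f s x := by
  unfold pd
  exact (hf.fderiv_right (by simp)).clm_apply contDiff_const

lemma pd_comm (hf : ContDiff ℝ (⊤ : ℕ∞) f) (t m : Fin N) (x : Fin N → ℝ) :
    pd (fun x => pd f t x) m x = pd (fun x => pd f m x) t x := by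
  have hdiff : Differentiable ℝ f := hf.differentiable (by simp)
  have h1 : ∀ y, HasFDerivAt f (fderiv ℝ f y) y := fun y => (hdiff y).hasFDerivAt
  have h2 : HasFDerivAt (fderiv ℝ f) (fderiv ℝ (fderiv ℝ f) x) x :=
    (((hf.fderiv_right (m := (⊤ : ℕ∞)) (by simp)).differentiable (by simp)) x).hasFDerivAt
  have key : ∀ v w : Fin N → ℝ,
      fderiv ℝ (fun x => fderiv ℝ f x v) x w = fderiv ℝ (fderiv ℝ f) x w v := by
    intro v w
    have hc : DifferentiableAt ℝ (fderiv ℝ f) x :=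
      ((hf.fderiv_right (m := (⊤ : ℕ∞)) (by simp)).differentiable (by simp)) x
    rw [fderiv_clm_apply hc (differentiableAt_const v)]
    simp
  unfold pd
  rw [key, key, second_derivative_symmetric h1 h2]
end AuxPD
section AuxPDT
variable {N : ℕ} {z : (Fin N → ℝ) × (Fin N → ℝ)} {a : Fin N ⊕ Fin N}

lemma pdT_congr {F G : (Fin N → ℝ) × (Fin N → ℝ) → ℝ} (h : F = G) :
    pdT F a z = pdT G a z := by rw [h]

lemma pdT_const (c : ℝ) : pdT (fun _ => c) a z = 0 := by simp [pdT]

lemma pdT_fst_comp (f : (Fin N → ℝ) → ℝ) (hf : DifferentiableAt ℝ f z.1) :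
    pdT (fun z => f z.1) a z = Sum.elim (fun m => pd f m z.1) (fun _ => 0) a := by
  have h : HasFDerivAt (fun z : (Fin N → ℝ) × (Fin N → ℝ) => f z.1)
      ((fderiv ℝ f z.1).comp (ContinuousLinearMap.fst ℝ (Fin N → ℝ) (Fin N → ℝ))) z :=
    hf.hasFDerivAt.comp z hasFDerivAt_fst
  unfold pdT
  rw [h.fderiv]
  cases a with
  | inl m => simp [dir, pd]
  | inr m => simp [dir]

lemma pdT_tangent (g : Fin N → (Fin N → ℝ) → ℝ) (h : (Fin N → ℝ) → ℝ)
    (hg : ∀ t, DifferentiableAt ℝ (g t) z.1) (hh : DifferentiableAt ℝ h z.1) :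
    pdT (fun z => (∑ t, g t z.1 * z.2 t) + h z.1) a z =
      Sum.elim (fun m => (∑ t, pd (g t) m z.1 * z.2 t) + pd h m z.1) (fun m => g m z.1) a := by
  have hder : ∀ t : Fin N, HasFDerivAt (fun z : (Fin N → ℝ) × (Fin N → ℝ) => g t z.1 * z.2 t)
      (g t z.1 • ((ContinuousLinearMap.proj t).comp
            (ContinuousLinearMap.snd ℝ (Fin N → ℝ) (Fin N → ℝ)))
        + z.2 t • ((fderiv ℝ (g t) z.1).comp
            (ContinuousLinearMap.fst ℝ (Fin N → ℝ) (Fin N → ℝ)))) z := by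
    intro t
    have h1 : HasFDerivAt (fun z : (Fin N → ℝ) × (Fin N → ℝ) => g t z.1)
        ((fderiv ℝ (g t) z.1).comp (ContinuousLinearMap.fst ℝ (Fin N → ℝ) (Fin N → ℝ))) z :=
      (hg t).hasFDerivAt.comp z hasFDerivAt_fst
    have h2 : HasFDerivAt (fun z : (Fin N → ℝ) × (Fin N → ℝ) => z.2 t)
        ((ContinuousLinearMap.proj t).comp (ContinuousLinearMap.snd ℝ (Fin N → ℝ) (Fin N → ℝ)))
        z := (((ContinuousLinearMap.proj t).comp
          (ContinuousLinearMap.snd ℝ (Fin N → ℝ) (Fin N → ℝ)))).hasFDerivAt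
    exact h1.mul h2
  have hH : HasFDerivAt (fun z : (Fin N → ℝ) × (Fin N → ℝ) => h z.1)
      ((fderiv ℝ h z.1).comp (ContinuousLinearMap.fst ℝ (Fin N → ℝ) (Fin N → ℝ))) z :=
    hh.hasFDerivAt.comp z hasFDerivAt_fst
  have htot : HasFDerivAt (fun z : (Fin N → ℝ) × (Fin N → ℝ) => (∑ t, g t z.1 * z.2 t) + h z.1) _ z :=
    (HasFDerivAt.fun_sum (fun t (_ : t ∈ Finset.univ) => hder t)).add hH
  unfold pdT
  rw [htot.fderiv]
  cases a with
  | inl m =>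
    simp [dir, pd, mul_comm]
  | inr m =>
    simp [dir, pd, Pi.single_apply]

end AuxPDT
section Entries
variable {N : ℕ} (π : (Fin N → ℝ) → Matrix (Fin N) (Fin N) ℝ) (c : (Fin N → ℝ) → ℝ)
  (v₁ v₂ v₃ v₄ : (Fin N → ℝ) → Fin N → ℝ) (l : ℝ)

/-- Abbreviation for the deformed tensor. -/
noncomputable def PP (z : (Fin N → ℝ) × (Fin N → ℝ)) :
    Matrix (Fin N ⊕ Fin N) (Fin N ⊕ Fin N) ℝ :=
  tlift π z + (l * c z.1) • (wedge (liftV v₁) (liftV v₂) z + wedge (liftV v₃) (liftV v₄) z)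

/-- The wedge scalar. -/
def Wf (x : Fin N → ℝ) (i j : Fin N) : ℝ :=
  v₁ x i * v₂ x j - v₁ x j * v₂ x i + (v₃ x i * v₄ x j - v₃ x j * v₄ x i)

variable {z : (Fin N → ℝ) × (Fin N → ℝ)} {i j : Fin N}

lemma entry_ll : PP π c v₁ v₂ v₃ v₄ l z (Sum.inl i) (Sum.inl j) = 0 := by
  simp [PP, tlift, wedge, liftV, Matrix.add_apply, Matrix.smul_apply]

lemma entry_lr : PP π c v₁ v₂ v₃ v₄ l z (Sum.inl i) (Sum.inr j) = π z.1 i j := by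
  simp [PP, tlift, wedge, liftV, Matrix.add_apply, Matrix.smul_apply]

lemma entry_rl : PP π c v₁ v₂ v₃ v₄ l z (Sum.inr i) (Sum.inl j) = π z.1 i j := by
  simp [PP, tlift, wedge, liftV, Matrix.add_apply, Matrix.smul_apply]

lemma entry_rr : PP π c v₁ v₂ v₃ v₄ l z (Sum.inr i) (Sum.inr j) =
    (∑ t, pd (fun x => π x i j) t z.1 * z.2 t) + (fun x => l * c x * Wf v₁ v₂ v₃ v₄ x i j) z.1 := by
  simp [PP, tlift, wedge, liftV, Matrix.add_apply, Matrix.smul_apply, Wf]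
  ring

end Entries
section AuxMore
variable {N : ℕ} {f : (Fin N → ℝ) → ℝ} {x : Fin N → ℝ} {s : Fin N}

lemma pd_const_mul (a : ℝ) (hf : DifferentiableAt ℝ f x) :
    pd (fun x => a * f x) s x = a * pd f s x := by
  simp [pd, fderiv_const_mul hf]

end AuxMore

section PDTEntries
variable {N : ℕ} {π : (Fin N → ℝ) → Matrix (Fin N) (Fin N) ℝ} {c : (Fin N → ℝ) → ℝ}
  {v₁ v₂ v₃ v₄ : (Fin N → ℝ) → Fin N → ℝ} {l : ℝ}
  {z : (Fin N → ℝ) × (Fin N → ℝ)} {a : Fin N ⊕ Fin N} {i j : Fin N}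

lemma contDiff_Wf (h₁ : ∀ i, ContDiff ℝ (⊤ : ℕ∞) fun x => v₁ x i) (h₂ : ∀ i, ContDiff ℝ (⊤ : ℕ∞) fun x => v₂ x i)
    (h₃ : ∀ i, ContDiff ℝ (⊤ : ℕ∞) fun x => v₃ x i) (h₄ : ∀ i, ContDiff ℝ (⊤ : ℕ∞) fun x => v₄ x i) :
    ContDiff ℝ (⊤ : ℕ∞) fun x => Wf v₁ v₂ v₃ v₄ x i j :=
  ((((h₁ i).mul (h₂ j)).sub ((h₁ j).mul (h₂ i))).add
    (((h₃ i).mul (h₄ j)).sub ((h₃ j).mul (h₄ i))))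

lemma contDiff_q (hcs : ContDiff ℝ (⊤ : ℕ∞) c)
    (h₁ : ∀ i, ContDiff ℝ (⊤ : ℕ∞) fun x => v₁ x i) (h₂ : ∀ i, ContDiff ℝ (⊤ : ℕ∞) fun x => v₂ x i)
    (h₃ : ∀ i, ContDiff ℝ (⊤ : ℕ∞) fun x => v₃ x i) (h₄ : ∀ i, ContDiff ℝ (⊤ : ℕ∞) fun x => v₄ x i) :
    ContDiff ℝ (⊤ : ℕ∞) fun x => l * c x * Wf v₁ v₂ v₃ v₄ x i j :=
  ((contDiff_const.mul hcs).mul (contDiff_Wf h₁ h₂ h₃ h₄))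

lemma pdT_PP_ll : pdT (fun z => PP π c v₁ v₂ v₃ v₄ l z (Sum.inl i) (Sum.inl j)) a z = 0 := by
  rw [pdT_congr (funext fun z => entry_ll π c v₁ v₂ v₃ v₄ l)]
  exact pdT_const 0

lemma pdT_PP_lr (hπs : ∀ i j, ContDiff ℝ (⊤ : ℕ∞) fun x => π x i j) :
    pdT (fun z => PP π c v₁ v₂ v₃ v₄ l z (Sum.inl i) (Sum.inr j)) a z =
      Sum.elim (fun m => pd (fun x => π x i j) m z.1) (fun _ => 0) a := by
  rw [pdT_congr (funext fun z => entry_lr π c v₁ v₂ v₃ v₄ l)]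
  exact pdT_fst_comp _ (((hπs i j).differentiable (by simp)).differentiableAt)

lemma pdT_PP_rl (hπs : ∀ i j, ContDiff ℝ (⊤ : ℕ∞) fun x => π x i j) :
    pdT (fun z => PP π c v₁ v₂ v₃ v₄ l z (Sum.inr i) (Sum.inl j)) a z =
      Sum.elim (fun m => pd (fun x => π x i j) m z.1) (fun _ => 0) a := by
  rw [pdT_congr (funext fun z => entry_rl π c v₁ v₂ v₃ v₄ l)]
  exact pdT_fst_comp _ (((hπs i j).differentiable (by simp)).differentiableAt)

lemma pdT_PP_rr (hπs : ∀ i j, ContDiff ℝ (⊤ : ℕ∞) fun x => π x i j) (hcs : ContDiff ℝ (⊤ : ℕ∞) c)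
    (h₁ : ∀ i, ContDiff ℝ (⊤ : ℕ∞) fun x => v₁ x i) (h₂ : ∀ i, ContDiff ℝ (⊤ : ℕ∞) fun x => v₂ x i)
    (h₃ : ∀ i, ContDiff ℝ (⊤ : ℕ∞) fun x => v₃ x i) (h₄ : ∀ i, ContDiff ℝ (⊤ : ℕ∞) fun x => v₄ x i) :
    pdT (fun z => PP π c v₁ v₂ v₃ v₄ l z (Sum.inr i) (Sum.inr j)) a z =
      Sum.elim
        (fun m => (∑ t, pd (fun x => pd (fun x => π x i j) t x) m z.1 * z.2 t)
          + pd (fun x => l * c x * Wf v₁ v₂ v₃ v₄ x i j) m z.1)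
        (fun m => pd (fun x => π x i j) m z.1) a := by
  rw [pdT_congr (funext fun z => entry_rr π c v₁ v₂ v₃ v₄ l)]
  exact pdT_tangent (fun t => pd (fun x => π x i j) t) (fun x => l * c x * Wf v₁ v₂ v₃ v₄ x i j)
    (fun t => ((contDiff_pd (hπs i j) t).differentiable (by simp)).differentiableAt)
    (((contDiff_q hcs h₁ h₂ h₃ h₄).differentiable (by simp)).differentiableAt)

lemma pd_qf (hcs : ContDiff ℝ (⊤ : ℕ∞) c)
    (h₁ : ∀ i, ContDiff ℝ (⊤ : ℕ∞) fun x => v₁ x i) (h₂ : ∀ i, ContDiff ℝ (⊤ : ℕ∞) fun x => v₂ x i)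
    (h₃ : ∀ i, ContDiff ℝ (⊤ : ℕ∞) fun x => v₃ x i) (h₄ : ∀ i, ContDiff ℝ (⊤ : ℕ∞) fun x => v₄ x i) :
    pd (fun x => l * c x * Wf v₁ v₂ v₃ v₄ x i j) s x =
      l * pd c s x * Wf v₁ v₂ v₃ v₄ x i j
      + l * c x *
        ((pd (fun x => v₁ x i) s x * v₂ x j + v₁ x i * pd (fun x => v₂ x j) s x
          - (pd (fun x => v₁ x j) s x * v₂ x i + v₁ x j * pd (fun x => v₂ x i) s x))
        + (pd (fun x => v₃ x i) s x * v₄ x j + v₃ x i * pd (fun x => v₄ x j) s x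
          - (pd (fun x => v₃ x j) s x * v₄ x i + v₃ x j * pd (fun x => v₄ x i) s x))) := by
  have D : ∀ (v : (Fin N → ℝ) → Fin N → ℝ), (∀ i, ContDiff ℝ (⊤ : ℕ∞) fun x => v x i) →
      ∀ i, DifferentiableAt ℝ (fun x => v x i) x := fun v hv i =>
    ((hv i).differentiable (by simp)).differentiableAt
  have d1i := D v₁ h₁ i; have d1j := D v₁ h₁ j
  have d2i := D v₂ h₂ i; have d2j := D v₂ h₂ j
  have d3i := D v₃ h₃ i; have d3j := D v₃ h₃ j
  have d4i := D v₄ h₄ i; have d4j := D v₄ h₄ j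
  have dc : DifferentiableAt ℝ c x := (hcs.differentiable (by simp)).differentiableAt
  have dW : DifferentiableAt ℝ (fun x => Wf v₁ v₂ v₃ v₄ x i j) x :=
    (((contDiff_Wf h₁ h₂ h₃ h₄).differentiable (by simp)).differentiableAt)
  have e0 : pd (fun x => l * c x * Wf v₁ v₂ v₃ v₄ x i j) s x =
      pd (fun x => l * c x) s x * Wf v₁ v₂ v₃ v₄ x i j
      + (l * c x) * pd (fun x => Wf v₁ v₂ v₃ v₄ x i j) s x :=
    pd_mul ((differentiableAt_const l).mul dc) dW
  rw [e0, pd_const_mul l dc]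
  have eW : pd (fun x => Wf v₁ v₂ v₃ v₄ x i j) s x =
      (pd (fun x => v₁ x i) s x * v₂ x j + v₁ x i * pd (fun x => v₂ x j) s x
        - (pd (fun x => v₁ x j) s x * v₂ x i + v₁ x j * pd (fun x => v₂ x i) s x))
      + (pd (fun x => v₃ x i) s x * v₄ x j + v₃ x i * pd (fun x => v₄ x j) s x
        - (pd (fun x => v₃ x j) s x * v₄ x i + v₃ x j * pd (fun x => v₄ x i) s x)) := by
    show pd (fun x => (v₁ x i * v₂ x j - v₁ x j * v₂ x i) + (v₃ x i * v₄ x j - v₃ x j * v₄ x i)) s x = _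
    rw [pd_add ((d1i.fun_mul d2j).fun_sub (d1j.fun_mul d2i)) ((d3i.fun_mul d4j).fun_sub (d3j.fun_mul d4i)),
      pd_sub (d1i.fun_mul d2j) (d1j.fun_mul d2i), pd_sub (d3i.fun_mul d4j) (d3j.fun_mul d4i),
      pd_mul d1i d2j, pd_mul d1j d2i, pd_mul d3i d4j, pd_mul d3j d4i]
  rw [eW]

end PDTEntries
section KeyRRR
variable {N : ℕ}

lemma keyRRR (A : Fin N → Fin N → ℝ) (dA : Fin N → Fin N → Fin N → ℝ)
    (dd : Fin N → Fin N → Fin N → Fin N → ℝ) (dC : Fin N → ℝ)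
    (u1 u2 u3 u4 : Fin N → ℝ) (d1 d2 d3 d4 : Fin N → Fin N → ℝ)
    (y : Fin N → ℝ) (l C : ℝ) (i j k : Fin N)
    (hJd : ∀ t, ∑ m, ((dA i m t * dA j k m + A i m * dd j k t m) + (dA j m t * dA k i m + A j m * dd k i t m) + (dA k m t * dA i j m + A k m * dd i j t m)) = 0)
    (hCas : ∀ a, ∑ m, A a m * dC m = 0)
    (hE1 : ∀ a b, ∑ m, (dA a b m * u1 m + A b m * d1 a m - A a m * d1 b m) = 0)
    (hE2 : ∀ a b, ∑ m, (dA a b m * u2 m + A b m * d2 a m - A a m * d2 b m) = 0)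
    (hE3 : ∀ a b, ∑ m, (dA a b m * u3 m + A b m * d3 a m - A a m * d3 b m) = 0)
    (hE4 : ∀ a b, ∑ m, (dA a b m * u4 m + A b m * d4 a m - A a m * d4 b m) = 0) :
    (∑ m, (A i m * ((∑ t, dd j k t m * y t) + (l * dC m * ((u1 j * u2 k - u1 k * u2 j) + (u3 j * u4 k - u3 k * u4 j)) + l * C * ((d1 j m * u2 k + u1 j * d2 k m - (d1 k m * u2 j + u1 k * d2 j m)) + (d3 j m * u4 k + u3 j * d4 k m - (d3 k m * u4 j + u3 k * d4 j m))))) + A j m * ((∑ t, dd k i t m * y t) + (l * dC m * ((u1 k * u2 i - u1 i * u2 k) + (u3 k * u4 i - u3 i * u4 k)) + l * C * ((d1 k m * u2 i + u1 k * d2 i m - (d1 i m * u2 k + u1 i * d2 k m)) + (d3 k m * u4 i + u3 k * d4 i m - (d3 i m * u4 k + u3 i * d4 k m))))) + A k m * ((∑ t, dd i j t m * y t) + (l * dC m * ((u1 i * u2 j - u1 j * u2 i) + (u3 i * u4 j - u3 j * u4 i)) + l * C * ((d1 i m * u2 j + u1 i * d2 j m - (d1 j m * u2 i + u1 j * d2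 i m)) + (d3 i m * u4 j + u3 i * d4 j m - (d3 j m * u4 i + u3 j * d4 i m)))))))
      + (∑ m, (((∑ t, dA i m t * y t) + l * C * ((u1 i * u2 m - u1 m * u2 i) + (u3 i * u4 m - u3 m * u4 i))) * dA j k m + ((∑ t, dA j m t * y t) + l * C * ((u1 j * u2 m - u1 m * u2 j) + (u3 j * u4 m - u3 m * u4 j))) * dA k i m + ((∑ t, dA k m t * y t) + l * C * ((u1 k * u2 m - u1 m * u2 k) + (u3 k * u4 m - u3 m * u4 k))) * dA i j m)) = 0 := by
  have hsplit : ∀ m, (A i m * ((∑ t, dd j k t m * y t) + (l * dC m * ((u1 j * u2 k - u1 k * u2 j) + (u3 j * u4 k - u3 k * u4 j)) + l * C * ((d1 j m * u2 k + u1 j * d2 k m - (d1 k m * u2 j + u1 k * d2 j m)) + (d3 j m * u4 k + u3 j * d4 k m - (d3 k m * u4 j + u3 k * d4 j m))))) + A j m * ((∑ t, dd k i t m * y t) + (l * dC m * ((u1 k * u2 i - u1 i * u2 k) + (u3 k * u4 i - u3 i * u4 k)) + l * C * ((d1 k m * u2 i + u1 k * d2 i m - (d1 i m * u2 k + u1 i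 * d2 k m)) + (d3 k m * u4 i + u3 k * d4 i m - (d3 i m * u4 k + u3 i * d4 k m))))) + A k m * ((∑ t, dd i j t m * y t) + (l * dC m * ((u1 i * u2 j - u1 j * u2 i) + (u3 i * u4 j - u3 j * u4 i)) + l * C * ((d1 i m * u2 j + u1 i * d2 j m - (d1 j m * u2 i + u1 j * d2 i m)) + (d3 i m * u4 j + u3 i * d4 j m - (d3 j m * u4 i + u3 j * d4 i m))))))
      + (((∑ t, dA i m t * y t) + l * C * ((u1 i * u2 m - u1 m * u2 i) + (u3 i * u4 m - u3 m * u4 i))) * dA j k m + ((∑ t, dA j m t * y t) + l * C * ((u1 j * u2 m - u1 m * u2 j) + (u3 j * u4 m - u3 m * u4 j))) * dA k i m + ((∑ t, dA k m t * y t) + l * C * ((u1 k * u2 m - u1 m * u2 k) + (u3 k * u4 m - u3 m * u4 k))) * dA i j m)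
      = (∑ t, ((dA i m t * dA j k m + A i m * dd j k t m) + (dA j m t * dA k i m + A j m * dd k i t m) + (dA k m t * dA i j m + A k m * dd i j t m)) * y t) + (((A i m * dC m) * (l * ((u1 j * u2 k - u1 k * u2 j) + (u3 j * u4 k - u3 k * u4 j))) + (A j m * dC m) * (l * ((u1 k * u2 i - u1 i * u2 k) + (u3 k * u4 i - u3 i * u4 k))) + (A k m * dC m) * (l * ((u1 i * u2 j - u1 j * u2 i) + (u3 i * u4 j - u3 j * u4 i)))) + l * C * (u1 k * (dA i j m * u2 m + A j m * d2 i m - A i m * d2 j m) + u1 i * (dA j k m * u2 m + A k m * d2 j m - A j m * d2 k m) + u1 j * (dA k i m * u2 m + A i m * d2 k m - A k m * d2 i m) - (u2 k * (dA i j m * u1 m + A j m * d1 i m - A i m * d1 j m) + u2 i * (dA j k m * u1 m + A k m * d1 j m - A j m * d1 k m) + u2 j * (dA k i m * u1 m + A i m * d1 k m - A k m * d1 i m)) + u3 k * (dA i j m * u4 m + A j m * d4 i m - A i m * d4 j m) + u3 i * (dA j k m * u4 m + A k m * d4 j m - A j m * d4 k m) + u3 j * (dA k i m * u4 m + A i m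 * d4 k m - A k m * d4 i m) - (u4 k * (dA i j m * u3 m + A j m * d3 i m - A i m * d3 j m) + u4 i * (dA j k m * u3 m + A k m * d3 j m - A j m * d3 k m) + u4 j * (dA k i m * u3 m + A i m * d3 k m - A k m * d3 i m)))) := by
    intro m
    have hS0 : (∑ t, ((dA i m t * dA j k m + A i m * dd j k t m) + (dA j m t * dA k i m + A j m * dd k i t m) + (dA k m t * dA i j m + A k m * dd i j t m)) * y t)
        = A i m * (∑ t, dd j k t m * y t) + A j m * (∑ t, dd k i t m * y t) + A k m * (∑ t, dd i j t m * y t) + (∑ t, dA i m t * y t) * dA j k m + (∑ t, dA j m t * y t) * dA k i m + (∑ t, dA k m t * y t) * dA i j m := by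
      rw [show (∑ t, ((dA i m t * dA j k m + A i m * dd j k t m) + (dA j m t * dA k i m + A j m * dd k i t m) + (dA k m t * dA i j m + A k m * dd i j t m)) * y t)
          = ∑ t, (A i m * (dd j k t m * y t) + A j m * (dd k i t m * y t) + A k m * (dd i j t m * y t) + (dA i m t * y t) * dA j k m + (dA j m t * y t) * dA k i m + (dA k m t * y t) * dA i j m) from Finset.sum_congr rfl fun t _ => by ring]
      simp only [Finset.sum_add_distrib]
      simp only [← Finset.mul_sum, ← Finset.sum_mul]
      try ring
    rw [hS0]
    ring
  calc (∑ m, (A i m * ((∑ t, dd j k t m * y t) + (l * dC m * ((u1 j * u2 k - u1 k * u2 j) + (u3 j * u4 k - u3 k * u4 j)) + l * C * ((d1 j m * u2 k + u1 j * d2 k m - (d1 k m * u2 j + u1 k * d2 j m)) + (d3 j m * u4 k + u3 j * d4 k m - (d3 k m * u4 j + u3 k * d4 j m))))) + A j m * ((∑ t, dd k i t m * y t) + (l * dC m * ((u1 k * u2 i - u1 i * u2 k) + (u3 k * u4 i - u3 i * u4 k)) + l * C * ((d1 k m * u2 i + u1 k * d2 i m - (d1 i m * u2 k + u1 i * d2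 k m)) + (d3 k m * u4 i + u3 k * d4 i m - (d3 i m * u4 k + u3 i * d4 k m))))) + A k m * ((∑ t, dd i j t m * y t) + (l * dC m * ((u1 i * u2 j - u1 j * u2 i) + (u3 i * u4 j - u3 j * u4 i)) + l * C * ((d1 i m * u2 j + u1 i * d2 j m - (d1 j m * u2 i + u1 j * d2 i m)) + (d3 i m * u4 j + u3 i * d4 j m - (d3 j m * u4 i + u3 j * d4 i m)))))))
      + (∑ m, (((∑ t, dA i m t * y t) + l * C * ((u1 i * u2 m - u1 m * u2 i) + (u3 i * u4 m - u3 m * u4 i))) * dA j k m + ((∑ t, dA j m t * y t) + l * C * ((u1 j * u2 m - u1 m * u2 j) + (u3 j * u4 m - u3 m * u4 j))) * dA k i m + ((∑ t, dA k m t * y t) + l * C * ((u1 k * u2 m - u1 m * u2 k) + (u3 k * u4 m - u3 m * u4 k))) * dA i j m))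
      = ∑ m, ((A i m * ((∑ t, dd j k t m * y t) + (l * dC m * ((u1 j * u2 k - u1 k * u2 j) + (u3 j * u4 k - u3 k * u4 j)) + l * C * ((d1 j m * u2 k + u1 j * d2 k m - (d1 k m * u2 j + u1 k * d2 j m)) + (d3 j m * u4 k + u3 j * d4 k m - (d3 k m * u4 j + u3 k * d4 j m))))) + A j m * ((∑ t, dd k i t m * y t) + (l * dC m * ((u1 k * u2 i - u1 i * u2 k) + (u3 k * u4 i - u3 i * u4 k)) + l * C * ((d1 k m * u2 i + u1 k * d2 i m - (d1 i m * u2 k + u1 i * d2 k m)) + (d3 k m * u4 i + u3 k * d4 i m - (d3 i m * u4 k + u3 i * d4 k m))))) + A k m * ((∑ t, dd i j t m * y t) + (l * dC m * ((u1 i * u2 j - u1 j * u2 i) + (u3 i * u4 j - u3 j * u4 i)) + l * C * ((d1 i m * u2 j + u1 i * d2 j m - (d1 j m * u2 i + u1 j * d2 i m)) + (d3 i m * u4 j + u3 i * d4 j m - (d3 j m * u4 i + u3 j * d4 i m))))))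
        + (((∑ t, dA i m t * y t) + l * C * ((u1 i * u2 m - u1 m * u2 i) + (u3 i * u4 m - u3 m * u4 i))) * dA j k m + ((∑ t, dA j m t * y t) + l * C * ((u1 j * u2 m - u1 m * u2 j) + (u3 j * u4 m - u3 m * u4 j))) * dA k i m + ((∑ t, dA k m t * y t) + l * C * ((u1 k * u2 m - u1 m * u2 k) + (u3 k * u4 m - u3 m * u4 k))) * dA i j m)) := by rw [← Finset.sum_add_distrib]
    _ = ∑ m, ((∑ t, ((dA i m t * dA j k m + A i m * dd j k t m) + (dA j m t * dA k i m + A j m * dd k i t m) + (dA k m t * dA i j m + A k m * dd i j t m)) * y t) + (((A i m * dC m) * (l * ((u1 j * u2 k - u1 k * u2 j) + (u3 j * u4 k - u3 k * u4 j))) + (A j m * dC m) * (l * ((u1 k * u2 i - u1 i * u2 k) + (u3 k * u4 i - u3 i * u4 k))) + (A k m * dC m) * (l * ((u1 i * u2 j - u1 j * u2 i) + (u3 i * u4 j - u3 j * u4 i)))) + l * C * (u1 k * (dA i j m * u2 m + A j m * d2 i m - A i m * d2 j m) + u1 i * (dA j k m * u2 m + A k m * d2 j m - A j m * d2 k m)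 + u1 j * (dA k i m * u2 m + A i m * d2 k m - A k m * d2 i m) - (u2 k * (dA i j m * u1 m + A j m * d1 i m - A i m * d1 j m) + u2 i * (dA j k m * u1 m + A k m * d1 j m - A j m * d1 k m) + u2 j * (dA k i m * u1 m + A i m * d1 k m - A k m * d1 i m)) + u3 k * (dA i j m * u4 m + A j m * d4 i m - A i m * d4 j m) + u3 i * (dA j k m * u4 m + A k m * d4 j m - A j m * d4 k m) + u3 j * (dA k i m * u4 m + A i m * d4 k m - A k m * d4 i m) - (u4 k * (dA i j m * u3 m + A j m * d3 i m - A i m * d3 j m) + u4 i * (dA j k m * u3 m + A k m * d3 j m - A j m * d3 k m) + u4 j * (dA k i m * u3 m + A i m * d3 k m - A k m * d3 i m))))) :=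
        Finset.sum_congr rfl fun m _ => hsplit m
    _ = (∑ m, ∑ t, ((dA i m t * dA j k m + A i m * dd j k t m) + (dA j m t * dA k i m + A j m * dd k i t m) + (dA k m t * dA i j m + A k m * dd i j t m)) * y t) + ∑ m, (((A i m * dC m) * (l * ((u1 j * u2 k - u1 k * u2 j) + (u3 j * u4 k - u3 k * u4 j))) + (A j m * dC m) * (l * ((u1 k * u2 i - u1 i * u2 k) + (u3 k * u4 i - u3 i * u4 k))) + (A k m * dC m) * (l * ((u1 i * u2 j - u1 j * u2 i) + (u3 i * u4 j - u3 j * u4 i)))) + l * C * (u1 k * (dA i j m * u2 m + A j m * d2 i m - A i m * d2 j m) + u1 i * (dA j k m * u2 m + A k m * d2 j m - A j m * d2 k m) + u1 j * (dA k i m * u2 m + A i m * d2 k m - A k m * d2 i m) - (u2 k * (dA i j m * u1 m + A j m * d1 i m - A i m * d1 j m) + u2 i * (dA j k m * u1 m + A k m * d1 j m - A j m * d1 k m) + u2 j * (dA k i m * u1 m + A i m * d1 k m - A k m * d1 i m)) + u3 k * (dA i j m * u4 m + A j m * d4 i m - A i m * d4 j m) + u3 i * (dA j k m * u4 m + A k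 m * d4 j m - A j m * d4 k m) + u3 j * (dA k i m * u4 m + A i m * d4 k m - A k m * d4 i m) - (u4 k * (dA i j m * u3 m + A j m * d3 i m - A i m * d3 j m) + u4 i * (dA j k m * u3 m + A k m * d3 j m - A j m * d3 k m) + u4 j * (dA k i m * u3 m + A i m * d3 k m - A k m * d3 i m)))) := by
        rw [Finset.sum_add_distrib]
    _ = 0 := by
        rw [Finset.sum_comm]
        have h1 : (∑ t, ∑ m, ((dA i m t * dA j k m + A i m * dd j k t m) + (dA j m t * dA k i m + A j m * dd k i t m) + (dA k m t * dA i j m + A k m * dd i j t m)) * y t) = 0 := by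
          rw [show (∑ t, ∑ m, ((dA i m t * dA j k m + A i m * dd j k t m) + (dA j m t * dA k i m + A j m * dd k i t m) + (dA k m t * dA i j m + A k m * dd i j t m)) * y t)
              = ∑ t, (∑ m, ((dA i m t * dA j k m + A i m * dd j k t m) + (dA j m t * dA k i m + A j m * dd k i t m) + (dA k m t * dA i j m + A k m * dd i j t m))) * y t from
            Finset.sum_congr rfl fun t _ => (Finset.sum_mul _ _ _).symm]
          simp only [hJd]
          simp
        rw [h1]
        have h2 : (∑ m, (((A i m * dC m) * (l * ((u1 j * u2 k - u1 k * u2 j) + (u3 j * u4 k - u3 k * u4 j))) + (A j m * dC m) * (l * ((u1 k * u2 i - u1 i * u2 k) + (u3 k * u4 i - u3 i * u4 k))) + (A k m * dC m) * (l * ((u1 i * u2 j - u1 j * u2 i) + (u3 i * u4 j - u3 j * u4 i)))) + l * C * (u1 k * (dA i j m * u2 m + A j m * d2 i m - A i m * d2 j m) + u1 i * (dA j k m * u2 m + A k m * d2 j m - A j m * d2 k m) + u1 j * (dA k i m * u2 m + A i m * d2 k m - A k m * d2 i m) - (u2 k * (dA i j m * u1 m + A j m * d1 i m - A i m * d1 j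 m) + u2 i * (dA j k m * u1 m + A k m * d1 j m - A j m * d1 k m) + u2 j * (dA k i m * u1 m + A i m * d1 k m - A k m * d1 i m)) + u3 k * (dA i j m * u4 m + A j m * d4 i m - A i m * d4 j m) + u3 i * (dA j k m * u4 m + A k m * d4 j m - A j m * d4 k m) + u3 j * (dA k i m * u4 m + A i m * d4 k m - A k m * d4 i m) - (u4 k * (dA i j m * u3 m + A j m * d3 i m - A i m * d3 j m) + u4 i * (dA j k m * u3 m + A k m * d3 j m - A j m * d3 k m) + u4 j * (dA k i m * u3 m + A i m * d3 k m - A k m * d3 i m))))) = 0 := by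
          rw [Finset.sum_add_distrib]
          have hc : (∑ m, ((A i m * dC m) * (l * ((u1 j * u2 k - u1 k * u2 j) + (u3 j * u4 k - u3 k * u4 j))) + (A j m * dC m) * (l * ((u1 k * u2 i - u1 i * u2 k) + (u3 k * u4 i - u3 i * u4 k))) + (A k m * dC m) * (l * ((u1 i * u2 j - u1 j * u2 i) + (u3 i * u4 j - u3 j * u4 i))))) = 0 := by
            simp only [Finset.sum_add_distrib, ← Finset.sum_mul]
            simp only [hCas]
            simp
          have hs : (∑ m, l * C * (u1 k * (dA i j m * u2 m + A j m * d2 i m - A i m * d2 j m) + u1 i * (dA j k m * u2 m + A k m * d2 j m - A j m * d2 k m) + u1 j * (dA k i m * u2 m + A i m * d2 k m - A k m * d2 i m) - (u2 k * (dA i j m * u1 m + A j m * d1 i m - A i m * d1 j m) + u2 i * (dA j k m * u1 m + A k m * d1 j m - A j m * d1 k m) + u2 j * (dA k i m * u1 m + A i m * d1 k m - A k m * d1 i m)) + u3 k * (dA i j m * u4 m + A j m * d4 i m - A i m * d4 j m) + u3 i * (dA j k m * u4 m + A k m * d4 j m - A j m * d4 k m) + u3 j * (dA k i m * u4 m + A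 i m * d4 k m - A k m * d4 i m) - (u4 k * (dA i j m * u3 m + A j m * d3 i m - A i m * d3 j m) + u4 i * (dA j k m * u3 m + A k m * d3 j m - A j m * d3 k m) + u4 j * (dA k i m * u3 m + A i m * d3 k m - A k m * d3 i m)))) = 0 := by
            rw [← Finset.mul_sum]
            simp only [Finset.sum_add_distrib, Finset.sum_sub_distrib]
            simp only [← Finset.mul_sum]
            simp only [hE1, hE2, hE3, hE4]
            simp
          rw [hc, hs]
          simp
        rw [h2]
        simp
end KeyRRR
/-- `π_TM + λ c (v₁_V ∧ v₂_V + v₃_V ∧ v₄_V)` is a Poisson tensor. -/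
theorem deformation_sum_vertical_is_poisson {N : ℕ}
    (π : (Fin N → ℝ) → Matrix (Fin N) (Fin N) ℝ) (c : (Fin N → ℝ) → ℝ)
    (v₁ v₂ v₃ v₄ : (Fin N → ℝ) → Fin N → ℝ) (l : ℝ)
    (hπ : IsPoisson π) (hc : IsCasimir π c)
    (h₁ : IsPoissonVF π v₁) (h₂ : IsPoissonVF π v₂)
    (h₃ : IsPoissonVF π v₃) (h₄ : IsPoissonVF π v₄) :
    IsPoissonT (fun z => tlift π z
      + (l * c z.1) • (wedge (liftV v₁) (liftV v₂) z + wedge (liftV v₃) (liftV v₄) z)) := by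
  obtain ⟨hπs, hπa, hπj⟩ := hπ
  obtain ⟨hcs, hcc⟩ := hc
  obtain ⟨h₁s, h₁v⟩ := h₁
  obtain ⟨h₂s, h₂v⟩ := h₂
  obtain ⟨h₃s, h₃v⟩ := h₃
  obtain ⟨h₄s, h₄v⟩ := h₄
  show IsPoissonT (PP π c v₁ v₂ v₃ v₄ l)
  have hJd : ∀ (x : Fin N → ℝ) (i j k t : Fin N), ∑ m, ((pd (fun x => π x i m) t x * pd (fun x => π x j k) m x + π x i m * pd (fun x => pd (fun x => π x j k) t x) m x) + (pd (fun x => π x j m) t x * pd (fun x => π x k i) m x + π x j m * pd (fun x => pd (fun x => π x k i) t x) m x) + (pd (fun x => π x k m) t x * pd (fun x => π x i j) m x + π x k m * pd (fun x => pd (fun x => π x i j) t x) m x)) = 0 := by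
    intro x i j k t
    have dP : ∀ (a b : Fin N), DifferentiableAt ℝ (fun x => π x a b) x :=
      fun a b => ((hπs a b).differentiable (by simp)).differentiableAt
    have dPd : ∀ (a b t : Fin N), DifferentiableAt ℝ (fun x => pd (fun x => π x a b) t x) x :=
      fun a b t => ((contDiff_pd (hπs a b) t).differentiable (by simp)).differentiableAt
    have h0 : pd (fun x => ∑ m, (π x i m * pd (fun x => π x j k) m x + π x j m * pd (fun x => π x k i) m x + π x k m * pd (fun x => π x i j) m x)) t x = 0 := by
      rw [pd_congr (funext fun y => hπj y i j k) t x]; exact pd_const 0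
    rw [pd_sum _ (fun m => (((dP i m).fun_mul (dPd j k m)).fun_add ((dP j m).fun_mul (dPd k i m))).fun_add ((dP k m).fun_mul (dPd i j m)))] at h0
    have step : ∀ m : Fin N, pd (fun x => π x i m * pd (fun x => π x j k) m x + π x j m * pd (fun x => π x k i) m x + π x k m * pd (fun x => π x i j) m x) t x
        = (pd (fun x => π x i m) t x * pd (fun x => π x j k) m x + π x i m * pd (fun x => pd (fun x => π x j k) t x) m x) + (pd (fun x => π x j m) t x * pd (fun x => π x k i) m x + π x j m * pd (fun x => pd (fun x => π x k i) t x) m x) + (pd (fun x => π x k m) t x * pd (fun x => π x i j) m x + π x k m * pd (fun x => pd (fun x => π x i j) t x) m x) := by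
      intro m
      rw [pd_add (((dP i m).fun_mul (dPd j k m)).fun_add ((dP j m).fun_mul (dPd k i m))) ((dP k m).fun_mul (dPd i j m)),
        pd_add ((dP i m).fun_mul (dPd j k m)) ((dP j m).fun_mul (dPd k i m)),
        pd_mul (dP i m) (dPd j k m), pd_mul (dP j m) (dPd k i m), pd_mul (dP k m) (dPd i j m),
        pd_comm (hπs j k) m t x, pd_comm (hπs k i) m t x, pd_comm (hπs i j) m t x]
    calc ∑ m, ((pd (fun x => π x i m) t x * pd (fun x => π x j k) m x + π x i m * pd (fun x => pd (fun x => π x j k) t x) m x) + (pd (fun x => π x j m) t x * pd (fun x => π x k i) m x + π x j m * pd (fun x => pd (fun x => π x k i) t x) m x) + (pd (fun x => π x k m) t x * pd (fun x => π x i j) m x + π x k m * pd (fun x => pd (fun x => π x i j) t x) m x))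
        = ∑ m, pd (fun x => π x i m * pd (fun x => π x j k) m x + π x j m * pd (fun x => π x k i) m x + π x k m * pd (fun x => π x i j) m x) t x :=
          Finset.sum_congr rfl fun m _ => (step m).symm
      _ = 0 := h0
  have hCas' : ∀ (x : Fin N → ℝ) (a : Fin N), ∑ m, π x a m * pd c m x = 0 := by
    intro x a
    calc ∑ m, π x a m * pd c m x = ∑ m, -(pd c m x * π x m a) :=
          Finset.sum_congr rfl fun m _ => by rw [hπa x m a]; ring
      _ = -∑ m, pd c m x * π x m a := by rw [Finset.sum_neg_distrib]
      _ = 0 := by rw [hcc x a, neg_zero]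
  have hEgen : ∀ (v : (Fin N → ℝ) → Fin N → ℝ),
      (∀ x i j, ∑ s, (pd (fun x => π x i j) s x * v x s - π x s j * pd (fun x => v x i) s x - π x i s * pd (fun x => v x j) s x) = 0) →
      ∀ (x : Fin N → ℝ) (a b : Fin N), ∑ m, (pd (fun x => π x a b) m x * v x m + π x b m * pd (fun x => v x a) m x - π x a m * pd (fun x => v x b) m x) = 0 := by
    intro v hv x a b
    refine Eq.trans (Finset.sum_congr rfl fun m _ => ?_) (hv x a b)
    rw [hπa x m b]; ring
  refine ⟨?_, ?_, ?_⟩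
  · intro a b
    rcases a with i | i <;> rcases b with j | j
    · rw [show (fun z => PP π c v₁ v₂ v₃ v₄ l z (Sum.inl i) (Sum.inl j)) = fun _ => (0:ℝ) from funext fun z => entry_ll π c v₁ v₂ v₃ v₄ l]
      exact contDiff_const
    · rw [show (fun z => PP π c v₁ v₂ v₃ v₄ l z (Sum.inl i) (Sum.inr j)) = fun z : (Fin N → ℝ) × (Fin N → ℝ) => π z.1 i j from funext fun z => entry_lr π c v₁ v₂ v₃ v₄ l]
      exact (hπs i j).comp contDiff_fst
    · rw [show (fun z => PP π c v₁ v₂ v₃ v₄ l z (Sum.inr i) (Sum.inl j)) = fun z : (Fin N → ℝ) × (Fin N → ℝ) => π z.1 i j from funext fun z => entry_rl π c v₁ v₂ v₃ v₄ l]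
      exact (hπs i j).comp contDiff_fst
    · rw [show (fun z => PP π c v₁ v₂ v₃ v₄ l z (Sum.inr i) (Sum.inr j)) = fun z : (Fin N → ℝ) × (Fin N → ℝ) => (∑ t, pd (fun x => π x i j) t z.1 * z.2 t) + (fun x => l * c x * Wf v₁ v₂ v₃ v₄ x i j) z.1 from funext fun z => entry_rr π c v₁ v₂ v₃ v₄ l]
      refine ContDiff.add (ContDiff.sum fun t _ => ContDiff.mul ?_ ?_) ?_
      · exact (contDiff_pd (hπs i j) t).comp contDiff_fst
      · exact (((ContinuousLinearMap.proj t).comp (ContinuousLinearMap.snd ℝ (Fin N → ℝ) (Fin N → ℝ)))).contDiff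
      · exact (contDiff_q hcs h₁s h₂s h₃s h₄s).comp contDiff_fst
  · intro z a b
    rcases a with i | i <;> rcases b with j | j
    · simp only [entry_ll]; ring
    · simp only [entry_lr, entry_rl]; exact hπa z.1 i j
    · simp only [entry_lr, entry_rl]; exact hπa z.1 i j
    · simp only [entry_rr]
      have hpdanti : ∀ t : Fin N, pd (fun x => π x j i) t z.1 = -pd (fun x => π x i j) t z.1 := by
        intro t
        rw [pd_congr (funext fun y => hπa y i j) t z.1]
        exact pd_neg
      have hsum : (∑ t, pd (fun x => π x j i) t z.1 * z.2 t) = -(∑ t, pd (fun x => π x i j) t z.1 * z.2 t) := by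
        rw [← Finset.sum_neg_distrib]
        exact Finset.sum_congr rfl fun t _ => by rw [hpdanti t]; ring
      rw [hsum]
      try simp only [Wf]
      ring
  · intro z α β γ
    have hcyc : ∀ aa bb cc : Fin N ⊕ Fin N, (∑ s, (PP π c v₁ v₂ v₃ v₄ l z aa s * pdT (fun z => PP π c v₁ v₂ v₃ v₄ l z bb cc) s z + PP π c v₁ v₂ v₃ v₄ l z bb s * pdT (fun z => PP π c v₁ v₂ v₃ v₄ l z cc aa) s z + PP π c v₁ v₂ v₃ v₄ l z cc s * pdT (fun z => PP π c v₁ v₂ v₃ v₄ l z aa bb) s z)) = (∑ s, (PP π c v₁ v₂ v₃ v₄ l z bb s * pdT (fun z => PP π c v₁ v₂ v₃ v₄ l z cc aa) s z + PP π c v₁ v₂ v₃ v₄ l z cc s * pdT (fun z => PP π c v₁ v₂ v₃ v₄ l z aa bb) s z + PP π c v₁ v₂ v₃ v₄ l z aa s * pdT (fun z => PP π c v₁ v₂ v₃ v₄ l z bb cc) s z)) :=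
      fun aa bb cc => Finset.sum_congr rfl fun s _ => by ring
    have cLLL : ∀ i j k : Fin N, (∑ s, (PP π c v₁ v₂ v₃ v₄ l z (Sum.inl i) s * pdT (fun z => PP π c v₁ v₂ v₃ v₄ l z (Sum.inl j) (Sum.inl k)) s z + PP π c v₁ v₂ v₃ v₄ l z (Sum.inl j) s * pdT (fun z => PP π c v₁ v₂ v₃ v₄ l z (Sum.inl k) (Sum.inl i)) s z + PP π c v₁ v₂ v₃ v₄ l z (Sum.inl k) s * pdT (fun z => PP π c v₁ v₂ v₃ v₄ l z (Sum.inl i) (Sum.inl j)) s z)) = 0 := by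
      intro i j k
      rw [Fintype.sum_sum_type]
      simp only [pdT_PP_ll, pdT_PP_lr hπs, pdT_PP_rl hπs, pdT_PP_rr hπs hcs h₁s h₂s h₃s h₄s, Sum.elim_inl, Sum.elim_inr]
      simp only [entry_ll, entry_lr, entry_rl, entry_rr, pd_qf hcs h₁s h₂s h₃s h₄s, mul_zero, zero_mul, add_zero, zero_add, Finset.sum_const_zero]
      try simp only [Wf]
    have cLLR : ∀ i j k : Fin N, (∑ s, (PP π c v₁ v₂ v₃ v₄ l z (Sum.inl i) s * pdT (fun z => PP π c v₁ v₂ v₃ v₄ l z (Sum.inl j) (Sum.inr k)) s z + PP π c v₁ v₂ v₃ v₄ l z (Sum.inl j) s * pdT (fun z => PP π c v₁ v₂ v₃ v₄ l z (Sum.inr k) (Sum.inl i)) s z + PP π c v₁ v₂ v₃ v₄ l z (Sum.inr k) s * pdT (fun z => PP π c v₁ v₂ v₃ v₄ l z (Sum.inl i) (Sum.inl j)) s z)) = 0 := by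
      intro i j k
      rw [Fintype.sum_sum_type]
      simp only [pdT_PP_ll, pdT_PP_lr hπs, pdT_PP_rl hπs, pdT_PP_rr hπs hcs h₁s h₂s h₃s h₄s, Sum.elim_inl, Sum.elim_inr]
      simp only [entry_ll, entry_lr, entry_rl, entry_rr, pd_qf hcs h₁s h₂s h₃s h₄s, mul_zero, zero_mul, add_zero, zero_add, Finset.sum_const_zero]
      try simp only [Wf]
    have cLRR : ∀ i j k : Fin N, (∑ s, (PP π c v₁ v₂ v₃ v₄ l z (Sum.inl i) s * pdT (fun z => PP π c v₁ v₂ v₃ v₄ l z (Sum.inr j) (Sum.inr k)) s z + PP π c v₁ v₂ v₃ v₄ l z (Sum.inr j) s * pdT (fun z => PP π c v₁ v₂ v₃ v₄ l z (Sum.inr k) (Sum.inl i)) s z + PP π c v₁ v₂ v₃ v₄ l z (Sum.inr k) s * pdT (fun z => PP π c v₁ v₂ v₃ v₄ l z (Sum.inl i) (Sum.inr j)) s z)) = 0 := by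
      intro i j k
      rw [Fintype.sum_sum_type]
      simp only [pdT_PP_ll, pdT_PP_lr hπs, pdT_PP_rl hπs, pdT_PP_rr hπs hcs h₁s h₂s h₃s h₄s, Sum.elim_inl, Sum.elim_inr]
      simp only [entry_ll, entry_lr, entry_rl, entry_rr, pd_qf hcs h₁s h₂s h₃s h₄s, mul_zero, zero_mul, add_zero, zero_add, Finset.sum_const_zero]
      try simp only [Wf]
      refine Eq.trans ?_ (hπj z.1 i j k)
      rw [← Finset.sum_add_distrib]
      exact Finset.sum_congr rfl fun m _ => by ring
    have cRRR : ∀ i j k : Fin N, (∑ s, (PP π c v₁ v₂ v₃ v₄ l z (Sum.inr i) s * pdT (fun z => PP π c v₁ v₂ v₃ v₄ l z (Sum.inr j) (Sum.inr k)) s z + PP π c v₁ v₂ v₃ v₄ l z (Sum.inr j) s * pdT (fun z => PP π c v₁ v₂ v₃ v₄ l z (Sum.inr k) (Sum.inr i)) s z + PP π c v₁ v₂ v₃ v₄ l z (Sum.inr k) s * pdT (fun z => PP π c v₁ v₂ v₃ v₄ l z (Sum.inr i) (Sum.inr j)) s z)) = 0 := by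
      intro i j k
      rw [Fintype.sum_sum_type]
      simp only [pdT_PP_ll, pdT_PP_lr hπs, pdT_PP_rl hπs, pdT_PP_rr hπs hcs h₁s h₂s h₃s h₄s, Sum.elim_inl, Sum.elim_inr]
      simp only [entry_ll, entry_lr, entry_rl, entry_rr, pd_qf hcs h₁s h₂s h₃s h₄s, mul_zero, zero_mul, add_zero, zero_add, Finset.sum_const_zero]
      try simp only [Wf]
      refine Eq.trans (congrArg₂ (· + ·) (Finset.sum_congr rfl fun m _ => ?_)
        (Finset.sum_congr rfl fun m _ => ?_))
        (keyRRR (fun a b => π z.1 a b) (fun a b s => pd (fun x => π x a b) s z.1)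
          (fun a b t m => pd (fun x => pd (fun x => π x a b) t x) m z.1) (fun m => pd c m z.1)
          (fun a => v₁ z.1 a) (fun a => v₂ z.1 a) (fun a => v₃ z.1 a) (fun a => v₄ z.1 a)
          (fun a m => pd (fun x => v₁ x a) m z.1) (fun a m => pd (fun x => v₂ x a) m z.1)
          (fun a m => pd (fun x => v₃ x a) m z.1) (fun a m => pd (fun x => v₄ x a) m z.1)
          z.2 l (c z.1) i j k (fun t => hJd z.1 i j k t) (fun a => hCas' z.1 a)
          (fun a b => hEgen v₁ h₁v z.1 a b) (fun a b => hEgen v₂ h₂v z.1 a b)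
          (fun a b => hEgen v₃ h₃v z.1 a b) (fun a b => hEgen v₄ h₄v z.1 a b)) <;> ring
    rcases α with i | i <;> rcases β with j | j <;> rcases γ with k | k
    · exact cLLL i j k
    · exact cLLR i j k
    · rw [hcyc, hcyc]; exact cLLR k i j
    · exact cLRR i j k
    · rw [hcyc]; exact cLLR j k i
    · rw [hcyc]; exact cLRR j k i
    · rw [hcyc, hcyc]; exact cLRR k i j
    · exact cRRR i j k
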